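/- Let M and M′ be PKSs with M ⪯ M′ (M′ is a refinement of M), let π be a path (note that M and M′ have the same states and transitions, so they have the same paths), and let φ be an LTL formula. If [(M, π) ⊨₃ φ] ∈ {⊤, ⊥}, then [(M′, π) ⊨₃ φ] = [(M, π) ⊨₃ φ]. -/

import Mathlib

set_option autoImplicit false

open Classical

noncomputable section

/-- Three-valued truth values: `0` is false (⊥), `1` is unknown (?), `2` is true (⊤),
linearly ordered by the information ordering ⊥ < ? < ⊤. -/
abbrev TV : Type := Fin 3

namespace TV

/-- The truth value ⊥ (false). -/
def ff : TV := 0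
/-- The truth value ? (unknown/maybe). -/
def uu : TV := 1
/-- The truth value ⊤ (true). -/
def tt : TV := 2

/-- `comp` swaps ⊤ and ⊥ and fixes ?. -/
def comp : TV → TV
  | ⟨0, _⟩ => tt
  | ⟨1, _⟩ => uu
  | _ => ff

end TV

/-- LTL formulae over a set `A` of atomic propositions (with the standard
derived/dual operators: falsum, disjunction, release, globally). -/
inductive LTL (A : Type) : Type
  | fls : LTL A
  | atom (a : A) : LTL A
  | neg (φ : LTL A) : LTL A
  | conj (φ ψ : LTL A) : LTL A
  | disj (φ ψ : LTL A) : LTL A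
  | next (φ : LTL A) : LTL A
  | untl (φ ψ : LTL A) : LTL A
  | release (φ ψ : LTL A) : LTL A
  | glob (φ : LTL A) : LTL A

namespace LTL

/-- The atomic propositions occurring in a formula. -/
def atoms {A : Type} : LTL A → Set A
  | .fls => ∅
  | .atom a => {a}
  | .neg φ => φ.atoms
  | .conj φ ψ => φ.atoms ∪ ψ.atoms
  | .disj φ ψ => φ.atoms ∪ ψ.atoms
  | .next φ => φ.atoms
  | .untl φ ψ => φ.atoms ∪ ψ.atoms
  | .release φ ψ => φ.atoms ∪ ψ.atoms
  | .glob φ => φ.atoms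

/-- Renaming of the atomic propositions of a formula. -/
def map {A B : Type} (f : A → B) : LTL A → LTL B
  | .fls => .fls
  | .atom a => .atom (f a)
  | .neg φ => .neg (φ.map f)
  | .conj φ ψ => .conj (φ.map f) (ψ.map f)
  | .disj φ ψ => .disj (φ.map f) (ψ.map f)
  | .next φ => .next (φ.map f)
  | .untl φ ψ => .untl (φ.map f) (ψ.map f)
  | .release φ ψ => .release (φ.map f) (ψ.map f)
  | .glob φ => .glob (φ.map f)

end LTL

/-- A Partial Kripke Structure over state universe `St` and atomic-proposition
universe `A`: a set `S` of states, a left-total transition relation `R ⊆ S × S`,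
a set `S0 ⊆ S` of initial states, a set `AP` of atomic propositions, and a
three-valued labeling. -/
structure PKS (St A : Type) where
  S : Set St
  R : Set (St × St)
  S0 : Set St
  AP : Set A
  L : St → A → TV
  R_dom : ∀ p ∈ R, p.1 ∈ S ∧ p.2 ∈ S
  leftTotal : ∀ s ∈ S, ∃ s' ∈ S, (s, s') ∈ R
  S0_sub : S0 ⊆ S

/-- A Kripke Structure is a PKS whose labeling never takes the value `?`. -/
def IsKS {St A : Type} (M : PKS St A) : Prop :=
  ∀ s ∈ M.S, ∀ a ∈ M.AP, M.L s a ≠ TV.uu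

/-- `Refinement M M'` says that `M'` is a refinement of `M` (written `M ⪯ M'`). -/
def Refinement {St A : Type} (M M' : PKS St A) : Prop :=
  M'.S = M.S ∧ M'.R = M.R ∧ M'.S0 = M.S0 ∧ M'.AP = M.AP ∧
    ∀ s ∈ M.S, ∀ a ∈ M.AP,
      (M.L s a = TV.tt → M'.L s a = TV.tt) ∧ (M.L s a = TV.ff → M'.L s a = TV.ff)

/-- `M'` is a completion of `M` iff `M'` is a KS refining `M`. -/
def IsCompletion {St A : Type} (M M' : PKS St A) : Prop :=
  Refinement M M' ∧ IsKS M'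

/-- `Revision M M'` says that `M'` is a revision of `M`, i.e. `AP ⊆ AP'`. -/
def Revision {St A : Type} (M M' : PKS St A) : Prop :=
  M.AP ⊆ M'.AP

/-- The suffix `πᵏ` of an infinite sequence. -/
def shift {St : Type} (π : ℕ → St) (k : ℕ) : ℕ → St := fun n => π (n + k)

/-- `π` is a path: all consecutive pairs are transitions of `M`. -/
def IsPath {St A : Type} (M : PKS St A) (π : ℕ → St) : Prop :=
  ∀ i, (π i, π (i + 1)) ∈ M.R

/-- Three-valued LTL semantics `[(L, π) ⊨₃ φ]` of a formula on an infinite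
sequence of states, w.r.t. a three-valued labeling `L`. -/
def sat3 {St A : Type} (L : St → A → TV) : LTL A → (ℕ → St) → TV
  | .fls, _ => TV.ff
  | .atom a, π => L (π 0) a
  | .neg φ, π => TV.comp (sat3 L φ π)
  | .conj φ ψ, π => min (sat3 L φ π) (sat3 L ψ π)
  | .disj φ ψ, π => max (sat3 L φ π) (sat3 L ψ π)
  | .next φ, π => sat3 L φ (shift π 1)
  | .untl φ ψ, π =>
      ⨆ j : ℕ, min (⨅ i ∈ Finset.range j, sat3 L φ (shift π i)) (sat3 L ψ (shift π j))
  | .release φ ψ, π =>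
      ⨅ j : ℕ, max (⨆ i ∈ Finset.range j, sat3 L φ (shift π i)) (sat3 L ψ (shift π j))
  | .glob φ, π => ⨅ j : ℕ, sat3 L φ (shift π j)

/-- `[(M, s) ⊨₃ φ]`: minimum over all paths of `M` starting in `s`. -/
def stateSat3 {St A : Type} (M : PKS St A) (s : St) (φ : LTL A) : TV :=
  ⨅ π ∈ {π : ℕ → St | IsPath M π ∧ π 0 = s}, sat3 M.L φ π

/-- `[M ⊨₃ φ]`: minimum over all initial states. -/
def modelSat3 {St A : Type} (M : PKS St A) (φ : LTL A) : TV :=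
  ⨅ s ∈ M.S0, stateSat3 M s φ

/-- Classical two-valued LTL satisfaction of a formula on an infinite sequence
of states (an atom holds iff its label is ⊤). -/
def satC {St A : Type} (L : St → A → TV) : LTL A → (ℕ → St) → Prop
  | .fls, _ => False
  | .atom a, π => L (π 0) a = TV.tt
  | .neg φ, π => ¬ satC L φ π
  | .conj φ ψ, π => satC L φ π ∧ satC L ψ π
  | .disj φ ψ, π => satC L φ π ∨ satC L ψ π
  | .next φ, π => satC L φ (shift π 1)
  | .untl φ ψ, π => ∃ j, satC L ψ (shift π j) ∧ ∀ i < j, satC L φ (shift π i)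
  | .release φ ψ, π => ∀ j, satC L ψ (shift π j) ∨ ∃ i < j, satC L φ (shift π i)
  | .glob φ, π => ∀ j, satC L φ (shift π j)

/-- `[M ⊨ φ] = ⊤` for a KS `M` under the classical semantics: every path
starting in an initial state satisfies `φ`. -/
def modelSatC {St A : Type} (M : PKS St A) (φ : LTL A) : Prop :=
  ∀ π, IsPath M π → π 0 ∈ M.S0 → satC M.L φ π

/-- The thorough LTL semantics `[M ⊨_T φ]`. -/
def modelSatT {St A : Type} (M : PKS St A) (φ : LTL A) : TV :=
  if ∀ M', IsCompletion M M' → modelSatC M' φ then TV.tt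
  else if ∀ M', IsCompletion M M' → ¬ modelSatC M' φ then TV.ff
  else TV.uu

/-- Topological proof clauses for a PKS: propositional (TPP), transitions-from-state
(TPT) and initial-states (TPI) clauses. -/
inductive TPClause (St A : Type) : Type
  | tpp (s : St) (a : A) (v : TV) : TPClause St A
  | tpt (s : St) (T : Set St) : TPClause St A
  | tpi (S0 : Set St) : TPClause St A

/-- A TP-clause is a TP-clause *for* `M` if its components live in `M`. -/
def ClauseFor {St A : Type} (M : PKS St A) : TPClause St A → Prop
  | .tpp s a _ => s ∈ M.S ∧ a ∈ M.AP
  | .tpt s T => s ∈ M.S ∧ T ⊆ M.S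
  | .tpi S0 => S0 = M.S0

/-- `M'` is `Γ`-related to `M`. -/
def GammaRelated {St A : Type} (Γ : Set (TPClause St A)) (M M' : PKS St A) : Prop :=
  M.AP ⊆ M'.AP ∧
  (∀ s a v, TPClause.tpp s a v ∈ Γ → v = M'.L s a) ∧
  (∀ s T, TPClause.tpt s T ∈ Γ → T = {s' | s' ∈ M'.S ∧ (s, s') ∈ M'.R}) ∧
  (∀ S0, TPClause.tpi S0 ∈ Γ → S0 = M'.S0)

/-- `Ω` is an `x`-topological proof (`x`-TP) for `φ` in `M`:
`[M ⊨₃ φ] = x` and every `Ω`-related PKS has value ≥ x. -/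
def IsXTP {St A : Type} (Ω : Set (TPClause St A)) (M : PKS St A) (φ : LTL A) (x : TV) : Prop :=
  modelSat3 M φ = x ∧ ∀ M' : PKS St A, GammaRelated Ω M M' → x ≤ modelSat3 M' φ

/-- `M'` is an `Ω_x`-revision of `M`: `M'` is `Ω`-related to `M`
(where `Ω` is an `x`-TP for the property of interest in `M`). -/
def OmegaRevision {St A : Type} (Ω : Set (TPClause St A)) (M M' : PKS St A) : Prop :=
  GammaRelated Ω M M'

/-! ### Complement closure, approximations, and `⊨*` -/

/-- The complement-closed version `M_c` of `M`: atomic propositions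
`AP_c = AP ∪ {ᾱ | α ∈ AP}` (`.inl α` is `α`, `.inr α` is `ᾱ`). -/
def PKS.compClosed {St A : Type} (M : PKS St A) : PKS St (A ⊕ A) where
  S := M.S
  R := M.R
  S0 := M.S0
  AP := Sum.inl '' M.AP ∪ Sum.inr '' M.AP
  L := fun s x => Sum.rec (fun a => M.L s a) (fun a => TV.comp (M.L s a)) x
  R_dom := M.R_dom
  leftTotal := M.leftTotal
  S0_sub := M.S0_sub

/-- The pessimistic approximation `M_pes` (every `?` becomes ⊥). -/
def PKS.pes {St A : Type} (M : PKS St A) : PKS St (A ⊕ A) :=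
  { M.compClosed with
    L := fun s x => if M.compClosed.L s x = TV.uu then TV.ff else M.compClosed.L s x }

/-- The optimistic approximation `M_opt` (every `?` becomes ⊤). -/
def PKS.opt {St A : Type} (M : PKS St A) : PKS St (A ⊕ A) :=
  { M.compClosed with
    L := fun s x => if M.compClosed.L s x = TV.uu then TV.tt else M.compClosed.L s x }

mutual
/-- Negation normal form of `φ` over complement-closed propositions
(`¬α` becomes `ᾱ = .inr α`). -/
def normPos {A : Type} : LTL A → LTL (A ⊕ A)
  | .fls => .fls
  | .atom a => .atom (.inl a)
  | .neg φ => normNeg φ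
  | .conj φ ψ => .conj (normPos φ) (normPos ψ)
  | .disj φ ψ => .disj (normPos φ) (normPos ψ)
  | .next φ => .next (normPos φ)
  | .untl φ ψ => .untl (normPos φ) (normPos ψ)
  | .release φ ψ => .release (normPos φ) (normPos ψ)
  | .glob φ => .glob (normPos φ)

/-- `normNeg φ` is `norm(φ)`: the negation normal form of `¬φ`, with negated
atoms `¬α` replaced by the complement-closed propositions `ᾱ = .inr α`. -/
def normNeg {A : Type} : LTL A → LTL (A ⊕ A)
  | .fls => .neg .fls
  | .atom a => .atom (.inr a)
  | .neg φ => normPos φ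
  | .conj φ ψ => .disj (normNeg φ) (normNeg ψ)
  | .disj φ ψ => .conj (normNeg φ) (normNeg ψ)
  | .next φ => .next (normNeg φ)
  | .untl φ ψ => .release (normNeg φ) (normNeg ψ)
  | .release φ ψ => .untl (normNeg φ) (normNeg ψ)
  | .glob φ => .untl (.neg .fls) (normNeg φ)
end

/-- `A ⊨* φ` for a KS `A` over complement-closed propositions: no path of `A`
starting in an initial state satisfies `norm(φ)` under classical semantics. -/
def satStar {St A : Type} (K : PKS St (A ⊕ A)) (φ : LTL A) : Prop :=
  ∀ π, IsPath K π → π 0 ∈ K.S0 → ¬ satC K.L (normNeg φ) π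

/-! ### SNF encoding of a KS -/

/-- Finite syntactic disjunction of a finite set of formulae. -/
def bigOr {B C : Type} (T : Finset C) (f : C → LTL B) : LTL B :=
  (T.toList.map f).foldr LTL.disj LTL.fls

/-- The SNF initial clause `c_i = ⋁_{s ∈ S₀} p(s)`. State propositions `p(s)`
are encoded as `.inr s`, ordinary propositions as `.inl p`. -/
def ciClause {St P : Type} [Fintype St] (K : PKS St P) : LTL (P ⊕ St) :=
  bigOr K.S0.toFinite.toFinset (fun s => LTL.atom (Sum.inr s))

/-- The SNF clause `G(¬p(s) ∨ X(⋁_{(s,s') ∈ R} p(s')))`. -/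
def crClause {St P : Type} [Fintype St] (K : PKS St P) (s : St) : LTL (P ⊕ St) :=
  .glob (.disj (.neg (.atom (Sum.inr s)))
    (.next (bigOr {s' | (s, s') ∈ K.R}.toFinite.toFinset (fun s' => LTL.atom (Sum.inr s')))))

/-- The SNF clause `G(¬p(s) ∨ α)`. -/
def clT {St P : Type} (s : St) (p : P) : LTL (P ⊕ St) :=
  .glob (.disj (.neg (.atom (Sum.inr s))) (.atom (Sum.inl p)))

/-- The SNF clause `G(¬p(s) ∨ ¬α)`. -/
def clF {St P : Type} (s : St) (p : P) : LTL (P ⊕ St) :=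
  .glob (.disj (.neg (.atom (Sum.inr s))) (.neg (.atom (Sum.inl p))))

/-- The SNF clause `G(¬p(s) ∨ ¬p(s'))`. -/
def cregClause {St P : Type} (s s' : St) : LTL (P ⊕ St) :=
  .glob (.disj (.neg (.atom (Sum.inr s))) (.neg (.atom (Sum.inr s'))))

/-- The clause set `C_KS = {c_i} ∪ CR ∪ CL_⊤ ∪ CL_⊥` encoding a KS. -/
def CKSset {St P : Type} [Fintype St] (K : PKS St P) : Set (LTL (P ⊕ St)) :=
  {ciClause K} ∪
  {f | ∃ s ∈ K.S, f = crClause K s} ∪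
  {f | ∃ s ∈ K.S, ∃ p ∈ K.AP, K.L s p = TV.tt ∧ f = clT s p} ∪
  {f | ∃ s ∈ K.S, ∃ p ∈ K.AP, K.L s p = TV.ff ∧ f = clF s p}

/-- The clause set `C_REG = {G(¬p(s) ∨ ¬p(s')) | s, s' ∈ S, s ≠ s'}`. -/
def CREGset {St P : Type} (K : PKS St P) : Set (LTL (P ⊕ St)) :=
  {f | ∃ s ∈ K.S, ∃ s' ∈ K.S, s ≠ s' ∧ f = cregClause s s'}

/-- The SNF encoding `C_A = C_KS ∪ C_REG` of a KS. -/
def CAset {St P : Type} [Fintype St] (K : PKS St P) : Set (LTL (P ⊕ St)) :=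
  CKSset K ∪ CREGset K

/-- Suffix of an infinite word. -/
def shiftW {B : Type} (σ : ℕ → Set B) (k : ℕ) : ℕ → Set B := fun n => σ (n + k)

/-- Standard LTL satisfaction over infinite words over subsets of `B`. -/
def satW {B : Type} : LTL B → (ℕ → Set B) → Prop
  | .fls, _ => False
  | .atom a, σ => a ∈ σ 0
  | .neg φ, σ => ¬ satW φ σ
  | .conj φ ψ, σ => satW φ σ ∧ satW ψ σ
  | .disj φ ψ, σ => satW φ σ ∨ satW ψ σ
  | .next φ, σ => satW φ (shiftW σ 1)
  | .untl φ ψ, σ => ∃ j, satW ψ (shiftW σ j) ∧ ∀ i < j, satW φ (shiftW σ i)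
  | .release φ ψ, σ => ∀ j, satW ψ (shiftW σ j) ∨ ∃ i < j, satW φ (shiftW σ i)
  | .glob φ, σ => ∀ j, satW φ (shiftW σ j)

/-- A word satisfies a set `C` of clauses iff it satisfies `η(C) = ⋀_{c ∈ C} c`. -/
def WordSatSet {B : Type} (σ : ℕ → Set B) (C : Set (LTL B)) : Prop :=
  ∀ c ∈ C, satW c σ

/-- A set of clauses is unsatisfiable iff `η(C)` has no model. -/
def UnsatSet {B : Type} (C : Set (LTL B)) : Prop :=
  ¬ ∃ σ : ℕ → Set B, WordSatSet σ C

/-- The set of TP-clauses extracted from a set `C'` of SNF clauses of the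
encoding of an approximation `K` of `M` (rules of the extraction table). -/
def extractTP {St A : Type} [Fintype St] (M : PKS St A) (K : PKS St (A ⊕ A))
    (C' : Set (LTL ((A ⊕ A) ⊕ St))) : Set (TPClause St A) :=
  {c | (c = TPClause.tpi M.S0 ∧ ciClause K ∈ C')
    ∨ (∃ s : St, c = TPClause.tpt s {s' | (s, s') ∈ M.R} ∧ crClause K s ∈ C')
    ∨ (∃ s a, c = TPClause.tpp s a (M.L s a) ∧
        (clT s (Sum.inl a) ∈ C' ∨ clF s (Sum.inr a) ∈ C'))
    ∨ (∃ s a, c = TPClause.tpp s a (TV.comp (M.L s a)) ∧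
        (clF s (Sum.inl a) ∈ C' ∨ clT s (Sum.inr a) ∈ C'))}

end

/-! Every connective of the three-valued semantics is monotone for the knowledge ordering
on truth values, so refining the labels can only turn `?` into `⊤` or `⊥` in the value of a
formula on a path; definite values are kept. -/

namespace TV

/-- The knowledge ordering, not the order `≤` of `Fin 3` (the truth ordering used by `min`,
`max`, `⨆` and `⨅`). -/
def Refines (x y : TV) : Prop := (x = tt → y = tt) ∧ (x = ff → y = ff)

theorem Refines.eq_of_mem {x y : TV} (h : Refines x y) (hx : x ∈ ({tt, ff} : Set TV)) :
    y = x := by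
  rcases hx with rfl | rfl
  exacts [h.1 rfl, h.2 rfl]

theorem refines_comp {x y : TV} (h : Refines x y) : Refines (comp x) (comp y) := by
  revert x y; unfold Refines; decide

theorem refines_min {x x' y y' : TV} (hx : Refines x x') (hy : Refines y y') :
    Refines (min x y) (min x' y') := by
  revert x x' y y'; unfold Refines; decide

theorem refines_max {x x' y y' : TV} (hx : Refines x x') (hy : Refines y y') :
    Refines (max x y) (max x' y') := by
  revert x x' y y'; unfold Refines; decide

-- In the finite order `TV`, a supremum `⊤` (an infimum `⊥`) is attained.
theorem refines_iSup {ι : Sort*} {f g : ι → TV} (h : ∀ i, Refines (f i) (g i)) :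
    Refines (⨆ i, f i) (⨆ i, g i) := by
  refine ⟨fun hf => ?_, fun hf => iSup_eq_bot.2 fun i => (h i).2 (iSup_eq_bot.1 hf i)⟩
  obtain ⟨i, hi⟩ := iSup_eq_top.1 hf uu (by decide)
  have hfi : f i = tt := by generalize f i = x at hi; revert x; decide
  exact top_unique (le_iSup_of_le i ((h i).1 hfi).ge)

theorem refines_iInf {ι : Sort*} {f g : ι → TV} (h : ∀ i, Refines (f i) (g i)) :
    Refines (⨅ i, f i) (⨅ i, g i) := by
  refine ⟨fun hf => iInf_eq_top.2 fun i => (h i).1 (iInf_eq_top.1 hf i), fun hf => ?_⟩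
  obtain ⟨i, hi⟩ := iInf_eq_bot.1 hf uu (by decide)
  have hfi : f i = ff := by generalize f i = x at hi; revert x; decide
  exact bot_unique (iInf_le_of_le i ((h i).2 hfi).le)

end TV

open TV

theorem sat3_refines {St A : Type} {L L' : St → A → TV} {φ : LTL A} {π : ℕ → St}
    (h : ∀ n, ∀ a ∈ φ.atoms, Refines (L (π n) a) (L' (π n) a)) :
    Refines (sat3 L φ π) (sat3 L' φ π) := by
  induction φ generalizing π with
  | fls => exact ⟨id, fun _ => rfl⟩
  | atom a => exact h 0 a rfl
  | neg φ ih => exact refines_comp (ih h)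
  | conj φ ψ ihφ ihψ =>
    exact refines_min (ihφ fun n a ha => h n a (.inl ha)) (ihψ fun n a ha => h n a (.inr ha))
  | disj φ ψ ihφ ihψ =>
    exact refines_max (ihφ fun n a ha => h n a (.inl ha)) (ihψ fun n a ha => h n a (.inr ha))
  | next φ ih => exact ih fun n => h (n + 1)
  | untl φ ψ ihφ ihψ =>
    exact refines_iSup fun j => refines_min
      (refines_iInf fun i => refines_iInf fun _ => ihφ fun n a ha => h (n + i) a (.inl ha))
      (ihψ fun n a ha => h (n + j) a (.inr ha))
  | release φ ψ ihφ ihψ =>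
    exact refines_iInf fun j => refines_max
      (refines_iSup fun i => refines_iSup fun _ => ihφ fun n a ha => h (n + i) a (.inl ha))
      (ihψ fun n a ha => h (n + j) a (.inr ha))
  | glob φ ih => exact refines_iInf fun j => ih fun n => h (n + j)

theorem IsPath.mem_S {St A : Type} {M : PKS St A} {π : ℕ → St} (hπ : IsPath M π) (n : ℕ) :
    π n ∈ M.S :=
  (M.R_dom _ (hπ n)).1

/-- Let `M ⪯ M'` (M' a refinement of M), let `π` be a path and `φ` an
LTL formula. If `[(M, π) ⊨₃ φ] ∈ {⊤, ⊥}` then `[(M', π) ⊨₃ φ] = [(M, π) ⊨₃ φ]`. -/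
theorem path_value_preserved_by_refinement {St A : Type} (M M' : PKS St A)
    (href : Refinement M M') (π : ℕ → St) (hπ : IsPath M π)
    (φ : LTL A) (hatoms : φ.atoms ⊆ M.AP)
    (hval : sat3 M.L φ π ∈ ({TV.tt, TV.ff} : Set TV)) :
    sat3 M'.L φ π = sat3 M.L φ π :=
  (sat3_refines fun n a ha => href.2.2.2.2 (π n) (hπ.mem_S n) a (hatoms ha)).eq_of_mem hval
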